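/- Let A be an n-by-n skew-symmetric matrix over a field K and v ∈ Kⁿ. Then the set system D = ([n], 𝓑) with 𝓑 = { I ⊆ [n] : (A + v vᵀ)[I] is nonsingular } is a strong Δ-matroid (in particular 𝓑 is nonempty, since it contains ∅ by the convention det of the empty matrix is 1). -/

import Mathlib

/-!
Border `A` by the row `vᵀ`, the column `-v` and a zero corner at a new index `none`. The bordered
matrix `N` is again alternating, and expanding along the border gives
`det (A + v vᵀ)[S] = det N[S] + det N[S + none]`. Alternating matrices of odd order are singular,
so at most one term survives: the feasible sets are the `W \ {none}` with `N[W]` nonsingular.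
Forgetting an element preserves strong exchange, so it suffices to prove strong exchange for the
nonsingular principal submatrices of an alternating `N`. Tucker's principal pivot on a feasible
`I` preserves alternation and turns the minor at `S` into a nonzero multiple of the minor at
`I ∆ S`, which reduces to `I = ∅`. There, for `N[J]` nonsingular and `x ∈ J`, some `y` has
`N x y * N[J]⁻¹ y x ≠ 0`, as these terms sum to `1`; then `det N[{x, y}] = (N x y)²`, and by
Jacobi's complementary minor identity `det N[J \ {x, y}]` is a nonzero multiple of
`(N[J]⁻¹ y x)²`.
-/

open Matrix
open scoped symmDiff

/-- The principal submatrix of `M` on the index set `I` (with `det (psub M ∅) = 1`). -/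
def psub {m : Type*} {K : Type*} (M : Matrix m m K) (I : Finset m) :
    Matrix I I K := fun i j => M i.1 j.1

/-- `(E, 𝓑)` is a strong Δ-matroid. -/
def IsStrongDeltaMatroid {α : Type*} [DecidableEq α] (E : Finset α) (B : Set (Finset α)) : Prop :=
  (B.Nonempty ∧ (∀ b ∈ B, b ⊆ E) ∧
      ∀ b ∈ B, ∀ b' ∈ B, ∀ x ∈ b ∆ b', ∃ y ∈ b ∆ b', b ∆ ({x, y} : Finset α) ∈ B) ∧
    ∀ b ∈ B, ∀ b' ∈ B, ∀ x ∈ b ∆ b', ∃ y ∈ b ∆ b',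
      b ∆ ({x, y} : Finset α) ∈ B ∧ b' ∆ ({x, y} : Finset α) ∈ B

open Finset

def StrongExchange {α : Type*} [DecidableEq α] (B : Set (Finset α)) : Prop :=
  ∀ b ∈ B, ∀ b' ∈ B, ∀ x ∈ b ∆ b', ∃ y ∈ b ∆ b', b ∆ {x, y} ∈ B ∧ b' ∆ {x, y} ∈ B

theorem isStrongDeltaMatroid_univ_of_strongExchange {α : Type*} [Fintype α] [DecidableEq α]
    {B : Set (Finset α)} (hne : B.Nonempty) (h : StrongExchange B) :
    IsStrongDeltaMatroid univ B :=
  ⟨⟨hne, fun b _ => subset_univ b,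
    fun b hb b' hb' x hx => (h b hb b' hb' x hx).imp fun _ ⟨hy, h1, _⟩ => ⟨hy, h1⟩⟩, h⟩

namespace Finset

variable {α : Type*} [DecidableEq α]

theorem eraseNone_symmDiff (s t : Finset (Option α)) :
    eraseNone (s ∆ t) = eraseNone s ∆ eraseNone t := by
  ext
  simp [mem_symmDiff]

theorem eraseNone_pair_some (x : α) (o : Option α) :
    eraseNone {some x, o} = {x, o.getD x} := by
  cases o <;> ext <;> simp

end Finset

theorem StrongExchange.image_eraseNone {α : Type*} [DecidableEq α] {B : Set (Finset (Option α))}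
    (h : StrongExchange B) : StrongExchange (eraseNone '' B) := by
  rintro _ ⟨W, hW, rfl⟩ _ ⟨W', hW', rfl⟩ x hx
  rw [← eraseNone_symmDiff, mem_eraseNone] at hx
  obtain ⟨o, ho, h1, h2⟩ := h W hW W' hW' (some x) hx
  refine ⟨o.getD x, ?_, ⟨_, h1, ?_⟩, ⟨_, h2, ?_⟩⟩
  · rw [← eraseNone_symmDiff, mem_eraseNone]
    cases o
    · exact hx
    · exact ho
  all_goals rw [eraseNone_symmDiff, eraseNone_pair_some]

namespace Matrix

section Alternating

variable {m n R : Type*} [CommRing R] {M : Matrix m m R}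

def IsAlternating (M : Matrix m m R) : Prop := Mᵀ = -M ∧ ∀ i, M i i = 0

theorem IsAlternating.apply_swap (hM : M.IsAlternating) (i j : m) : M j i = -M i j :=
  congrFun (congrFun hM.1 i) j

theorem IsAlternating.principalSubmatrix (hM : M.IsAlternating) (S : Finset m) :
    (psub M S).IsAlternating :=
  ⟨by ext i j; exact hM.apply_swap i j, fun i => hM.2 i⟩

theorem IsAlternating.dotProduct_mulVec_self [Fintype m] (hM : M.IsAlternating) (x : m → R) :
    x ⬝ᵥ M *ᵥ x = 0 := by
  simp only [dotProduct, mulVec, mul_sum, ← sum_product']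
  refine sum_ninvolution Prod.swap (fun p => ?_) (fun p hp hswap => hp ?_) (fun _ => mem_univ _)
    Prod.swap_swap
  · rw [Prod.fst_swap, Prod.snd_swap, hM.apply_swap p.1 p.2]
    ring
  · obtain ⟨a, b⟩ := p
    obtain rfl : b = a := congrArg Prod.fst hswap
    simp [hM.2]

theorem IsAlternating.transpose_mul_mul [Fintype m] (hM : M.IsAlternating) (P : Matrix m n R) :
    (Pᵀ * M * P).IsAlternating := by
  refine ⟨by simp [transpose_mul, hM.1, Matrix.mul_assoc], fun i => ?_⟩
  rw [Matrix.mul_assoc]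
  exact hM.dotProduct_mulVec_self fun a => P a i

theorem IsAlternating.prod_perm_inv [Fintype m] [DecidableEq m] (hM : M.IsAlternating)
    (h : Odd (Fintype.card m)) (σ : Equiv.Perm m) :
    ∏ i, M (σ⁻¹ i) i = -∏ i, M (σ i) i := by
  calc ∏ i, M (σ⁻¹ i) i = ∏ i, M i (σ i) := by
        simpa using (Equiv.prod_comp σ fun i => M (σ⁻¹ i) i).symm
    _ = ∏ i, -M (σ i) i := by simp only [hM.apply_swap (σ _)]
    _ = -∏ i, M (σ i) i := by rw [prod_neg, card_univ, h.neg_one_pow, neg_one_mul]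

theorem IsAlternating.det_eq_zero_of_odd [Fintype m] [DecidableEq m] (hM : M.IsAlternating)
    (h : Odd (Fintype.card m)) : M.det = 0 := by
  rw [det_apply]
  refine sum_ninvolution (·⁻¹) (fun σ => ?_) (fun σ hσ hinv => hσ ?_) (fun _ => mem_univ _) inv_inv
  · rw [Equiv.Perm.sign_inv, hM.prod_perm_inv h, smul_neg, add_neg_cancel]
  · -- an involution of a set of odd size has a fixed point `a`, and `M a a = 0`
    obtain ⟨a, ha⟩ := Equiv.Perm.exists_fixed_point_of_prime (p := 2) (n := 1) h.not_two_dvd_nat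
      (σ := σ) (by rw [pow_one, sq, mul_eq_one_iff_eq_inv, hinv])
    rw [prod_eq_zero (mem_univ a) (by rw [ha, hM.2]), smul_zero]

theorem IsAlternating.det_psub_eq_zero_of_odd [DecidableEq m] (hM : M.IsAlternating)
    {S : Finset m} (h : Odd S.card) : (psub M S).det = 0 :=
  (hM.principalSubmatrix S).det_eq_zero_of_odd (by rwa [Fintype.card_coe])

theorem IsAlternating.even_card_of_det_psub_ne_zero [DecidableEq m] (hM : M.IsAlternating)
    {S : Finset m} (h : (psub M S).det ≠ 0) : Even S.card :=
  Nat.not_odd_iff_even.mp fun hodd => h (hM.det_psub_eq_zero_of_odd hodd)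

end Alternating

section Minors

variable {m R : Type*} [CommRing R] [DecidableEq m]

theorem det_psub_map {α : Type*} [DecidableEq α] (M : Matrix m m R) (f : α ↪ m) (S : Finset α) :
    (psub M (S.map f)).det = (psub (M.submatrix f f) S).det := by
  rw [← det_submatrix_equiv_self (Finset.equivMap f S)]
  rfl

theorem det_psub_univ [Fintype m] (M : Matrix m m R) : (psub M univ).det = M.det := by
  rw [← det_submatrix_equiv_self (Equiv.subtypeUnivEquiv mem_univ).symm]
  rfl

theorem det_psub_pair (M : Matrix m m R) {a b : m} (hab : a ≠ b) :
    (psub M {a, b}).det = M a a * M b b - M a b * M b a := by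
  let f : Fin 2 ↪ m := ⟨![a, b], fun i j => by fin_cases i <;> fin_cases j <;> simp [hab, hab.symm]⟩
  have hf : (univ : Finset (Fin 2)).map f = {a, b} := by
    ext c
    simp only [mem_map, mem_univ, true_and, Fin.exists_fin_two, mem_insert, mem_singleton]
    exact ⟨fun h => h.imp Eq.symm Eq.symm, fun h => h.imp Eq.symm Eq.symm⟩
  rw [← hf, det_psub_map, det_psub_univ, det_fin_two]
  rfl

theorem IsAlternating.det_psub_pair {M : Matrix m m R} (hM : M.IsAlternating) {a b : m}
    (hab : a ≠ b) : (psub M {a, b}).det = M a b ^ 2 := by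
  rw [Matrix.det_psub_pair M hab, hM.2, hM.2, hM.apply_swap]
  ring

end Minors

section Pivot

variable {m n R K : Type*} [DecidableEq m]

def piecewiseRows (S : Finset m) (M N : Matrix m n R) : Matrix m n R :=
  of fun i => if i ∈ S then M i else N i

@[simp]
theorem piecewiseRows_apply (S : Finset m) (M N : Matrix m n R) (i : m) (j : n) :
    piecewiseRows S M N i j = if i ∈ S then M i j else N i j := by
  simp [piecewiseRows, ite_apply]

variable [Fintype m]

theorem det_piecewiseRows_one [CommRing R] (M : Matrix m m R) (S : Finset m) :
    (piecewiseRows S M 1).det = (psub M S).det := by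
  let e := Equiv.sumCompl (· ∈ S)
  have h : (piecewiseRows S M 1).submatrix e e =
      fromBlocks (psub M S) (of fun i (j : {j // j ∉ S}) => M i j) 0 1 := by
    ext (i | i) (j | j)
    · simp [e, psub, i.2]
    · simp [e, i.2]
    · have : i.1 ≠ j.1 := fun h => i.2 (h ▸ j.2)
      simp [e, i.2, this]
    · simp [e, i.2, one_apply, Subtype.ext_iff]
  rw [← det_submatrix_equiv_self e, h, det_fromBlocks_zero₂₁, det_one, mul_one]

theorem piecewiseRows_one_mul [CommRing R] (S : Finset m) (P : Matrix m m R) (Q : Matrix m n R) :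
    piecewiseRows S P 1 * Q = piecewiseRows S (P * Q) Q := by
  ext i j
  by_cases hi : i ∈ S <;> simp [hi, mul_apply, one_apply]

theorem transpose_piecewiseRows_mul_apply [CommRing R] (M : Matrix m m R) (I : Finset m)
    (j k : m) : ((piecewiseRows I M 1)ᵀ * piecewiseRows I 1 M) j k =
      (if k ∈ I then M k j else 0) + (if j ∈ I then 0 else M j k) := by
  have h : ∀ i, (if i ∈ I then M i j else (1 : Matrix m m R) i j) *
      (if i ∈ I then (1 : Matrix m m R) i k else M i k) =
      if i ∈ I then M i j * (1 : Matrix m m R) i k else (1 : Matrix m m R) i j * M i k :=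
    fun i => by split_ifs <;> rfl
  simp only [mul_apply, transpose_apply, piecewiseRows_apply, h, sum_ite]
  simp [one_apply]

theorem IsAlternating.transpose_piecewiseRows_mul [CommRing R] {M : Matrix m m R}
    (hM : M.IsAlternating) (I : Finset m) :
    ((piecewiseRows I M 1)ᵀ * piecewiseRows I 1 M).IsAlternating := by
  refine ⟨?_, fun j => ?_⟩
  · ext j k
    simp only [transpose_apply, neg_apply, transpose_piecewiseRows_mul_apply]
    by_cases hj : j ∈ I <;> by_cases hk : k ∈ I <;> simp [hj, hk, hM.apply_swap j k]
  · rw [transpose_piecewiseRows_mul_apply]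
    by_cases hj : j ∈ I <;> simp [hj, hM.2]

variable [Field K]

noncomputable def principalPivot (M : Matrix m m K) (I : Finset m) : Matrix m m K :=
  piecewiseRows I 1 M * (piecewiseRows I M 1)⁻¹

theorem piecewiseRows_principalPivot_mul {M : Matrix m m K} {I : Finset m}
    (hI : (psub M I).det ≠ 0) (S : Finset m) :
    piecewiseRows S (principalPivot M I) 1 * piecewiseRows I M 1 = piecewiseRows (I ∆ S) M 1 := by
  have hC : IsUnit (piecewiseRows I M 1).det := by
    rw [det_piecewiseRows_one]
    exact hI.isUnit
  rw [piecewiseRows_one_mul, principalPivot, Matrix.mul_assoc, nonsing_inv_mul _ hC,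
    Matrix.mul_one]
  ext i j
  by_cases hiI : i ∈ I <;> by_cases hiS : i ∈ S <;> simp [hiI, hiS, mem_symmDiff]

theorem det_psub_principalPivot_mul {M : Matrix m m K} {I : Finset m} (hI : (psub M I).det ≠ 0)
    (S : Finset m) : (psub (principalPivot M I) S).det * (psub M I).det = (psub M (I ∆ S)).det := by
  simpa only [det_mul, det_piecewiseRows_one] using
    congrArg det (piecewiseRows_principalPivot_mul hI S)

theorem det_psub_principalPivot_ne_zero_iff {M : Matrix m m K} {I : Finset m}
    (hI : (psub M I).det ≠ 0) (S : Finset m) :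
    (psub (principalPivot M I) S).det ≠ 0 ↔ (psub M (I ∆ S)).det ≠ 0 := by
  rw [← det_psub_principalPivot_mul hI S, mul_ne_zero_iff_right hI]

theorem principalPivot_univ (M : Matrix m m K) : principalPivot M univ = M⁻¹ := by
  have h1 : piecewiseRows univ 1 M = 1 := by ext; simp
  have h2 : piecewiseRows univ M 1 = M := by ext; simp
  rw [principalPivot, h1, h2, Matrix.one_mul]

theorem IsAlternating.principalPivot {M : Matrix m m K} (hM : M.IsAlternating) {I : Finset m}
    (hI : (psub M I).det ≠ 0) : (principalPivot M I).IsAlternating := by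
  set C := piecewiseRows I M 1
  have hC : IsUnit C.det := by
    rw [det_piecewiseRows_one]
    exact hI.isUnit
  have h : Matrix.principalPivot M I = C⁻¹ᵀ * (Cᵀ * piecewiseRows I 1 M) * C⁻¹ := by
    rw [← Matrix.mul_assoc, ← transpose_mul, mul_nonsing_inv _ hC, transpose_one, Matrix.one_mul]
    rfl
  rw [h]
  exact (hM.transpose_piecewiseRows_mul I).transpose_mul_mul _

theorem IsAlternating.inv {M : Matrix m m K} (hM : M.IsAlternating) : M⁻¹.IsAlternating := by
  by_cases hdet : M.det = 0
  · rw [nonsing_inv_apply_not_isUnit _ (by simpa using hdet)]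
    exact ⟨by simp, fun _ => rfl⟩
  · rw [← principalPivot_univ]
    exact hM.principalPivot (by rwa [det_psub_univ])

end Pivot

section Exchange

variable {m K : Type*} [DecidableEq m] [Field K]

theorem IsAlternating.exists_pair_det_psub_ne_zero {M : Matrix m m K} (hM : M.IsAlternating)
    {T : Finset m} (hT : (psub M T).det ≠ 0) {x : m} (hx : x ∈ T) :
    ∃ y ∈ T, (psub M {x, y}).det ≠ 0 ∧ (psub M (T ∆ {x, y})).det ≠ 0 := by
  set B := psub M T
  have hB : B.IsAlternating := hM.principalSubmatrix T
  let x' : T := ⟨x, hx⟩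
  obtain ⟨y', hBxy, hByx⟩ : ∃ y', B x' y' ≠ 0 ∧ B⁻¹ y' x' ≠ 0 := by
    by_contra! h
    have h1 : (B * B⁻¹) x' x' = 1 := by rw [mul_nonsing_inv _ hT.isUnit, one_apply_eq]
    rw [mul_apply, sum_eq_zero fun y _ => mul_eq_zero.mpr ((eq_or_ne _ 0).imp_right (h y))] at h1
    exact zero_ne_one h1
  have hxy : x' ≠ y' := by
    rintro rfl
    exact hBxy (hB.2 x')
  refine ⟨y', y'.2, ?_, ?_⟩
  · rw [hM.det_psub_pair (Subtype.coe_ne_coe.mpr hxy)]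
    exact pow_ne_zero 2 hBxy
  · -- Jacobi: the minors of `B⁻¹` are the complementary minors of `B`, up to the factor `det B`
    have hinv : (psub B⁻¹ {x', y'}).det ≠ 0 := by
      rw [hB.inv.det_psub_pair hxy, hB.inv.apply_swap]
      exact pow_ne_zero 2 (neg_ne_zero.mpr hByx)
    rw [← principalPivot_univ, det_psub_principalPivot_ne_zero_iff (by rwa [det_psub_univ])]
      at hinv
    have hmap : (univ ∆ {x', y'}).map (Function.Embedding.subtype (· ∈ T)) = T ∆ {x, y'.1} := by
      rw [map_eq_image, image_symmDiff _ _ (Function.Embedding.subtype _).injective]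
      simp [x']
    rw [← hmap, det_psub_map]
    exact hinv

theorem IsAlternating.strongExchange [Fintype m] {M : Matrix m m K} (hM : M.IsAlternating) :
    StrongExchange {S : Finset m | (psub M S).det ≠ 0} := by
  intro I hI J hJ x hx
  have hpivot := det_psub_principalPivot_ne_zero_iff hI
  obtain ⟨y, hy, hIxy, hJxy⟩ := (hM.principalPivot hI).exists_pair_det_psub_ne_zero
    ((hpivot _).2 (by rwa [symmDiff_symmDiff_cancel_left])) hx
  refine ⟨y, hy, (hpivot _).1 hIxy, ?_⟩
  have hJ' := (hpivot _).1 hJxy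
  rwa [symmDiff_assoc I J, symmDiff_symmDiff_cancel_left] at hJ'

end Exchange

section Bordered

variable {m R : Type*} [CommRing R]

def bordered (A : Matrix m m R) (v : m → R) : Matrix (Option m) (Option m) R
  | none, none => 0
  | none, some j => v j
  | some i, none => -v i
  | some i, some j => A i j

theorem IsAlternating.bordered {A : Matrix m m R} (hA : A.IsAlternating) (v : m → R) :
    (bordered A v).IsAlternating := by
  refine ⟨?_, ?_⟩
  · ext (_ | i) (_ | j) <;> simp [Matrix.bordered]
    exact hA.apply_swap i j
  · rintro (_ | i) <;> simp [Matrix.bordered, hA.2]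

variable [DecidableEq m]

theorem det_add_vecMulVec_self [Fintype m] (B : Matrix m m R) (u : m → R) :
    (B + vecMulVec u u).det = B.det + (bordered B u).det := by
  let c : Matrix m Unit R := of fun i _ => -u i
  let r : Matrix Unit m R := of fun _ j => u j
  let F : Matrix (m ⊕ Unit) (m ⊕ Unit) R := fromBlocks B c r 0
  have hF : fromBlocks B c r 1 = updateRow F (.inr ()) (F (.inr ()) + Pi.single (.inr ()) 1) := by
    ext i (j | j) <;> rcases i with i | i <;> simp [F, updateRow_apply]
  have hE : updateRow F (.inr ()) (Pi.single (.inr ()) 1) = fromBlocks B c 0 1 := by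
    ext i (j | j) <;> rcases i with i | i <;> simp [F, updateRow_apply]
  let e := Equiv.optionEquivSumPUnit.{0} m
  have hbordered : bordered B u = F.submatrix e e := by
    ext (_ | i) (_ | j) <;> rfl
  calc (B + vecMulVec u u).det = (fromBlocks B c r 1).det := by
        rw [det_fromBlocks_one₂₂]
        congr 1
        ext i j
        simp [c, r, mul_apply, vecMulVec]
    _ = F.det + (fromBlocks B c 0 1).det := by
        rw [hF, det_updateRow_add, updateRow_eq_self, hE]
    _ = B.det + (bordered B u).det := by
        rw [det_fromBlocks_zero₂₁, det_one, mul_one, hbordered, det_submatrix_equiv_self, add_comm]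

theorem det_psub_add_vecMulVec (A : Matrix m m R) (v : m → R) (S : Finset m) :
    (psub (A + vecMulVec v v) S).det =
      (psub (bordered A v) (S.map .some)).det + (psub (bordered A v) S.insertNone).det := by
  let f : Option S ↪ Option m := .optionMap (.subtype (· ∈ S))
  have hS : S.insertNone = univ.map f := by
    ext (_ | x)
    · simp [f]
    · simp only [some_mem_insertNone, mem_map, mem_univ, true_and]
      refine ⟨fun hx => ⟨some ⟨x, hx⟩, rfl⟩, ?_⟩
      rintro ⟨_ | ⟨y, hy⟩, hxy⟩
      · cases hxy
      · cases hxy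
        exact hy
  have hf : (bordered A v).submatrix f f = bordered (psub A S) fun i => v i := by
    ext (_ | i) (_ | j) <;> rfl
  rw [hS, det_psub_map _ f, det_psub_univ, hf, det_psub_map]
  exact det_add_vecMulVec_self (psub A S) fun i => v i

theorem IsAlternating.setOf_det_psub_add_vecMulVec_ne_zero {A : Matrix m m R}
    (hA : A.IsAlternating) (v : m → R) :
    {S : Finset m | (psub (A + vecMulVec v v) S).det ≠ 0} =
      eraseNone '' {W : Finset (Option m) | (psub (Matrix.bordered A v) W).det ≠ 0} := by
  have hN := hA.bordered v
  ext S
  simp only [Set.mem_ofPred_eq, Set.mem_image, det_psub_add_vecMulVec]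
  constructor
  · intro hS
    by_cases h0 : (psub (Matrix.bordered A v) (S.map .some)).det = 0
    · exact ⟨S.insertNone, by rwa [h0, zero_add] at hS, eraseNone_insertNone S⟩
    · exact ⟨S.map .some, h0, eraseNone_map_some S⟩
  · -- of the two lifts of `W.eraseNone`, one is `W` and the other has odd size
    rintro ⟨W, hW, rfl⟩
    have hcard : W.eraseNone.insertNone.card = (W.eraseNone.map .some).card + 1 := by
      rw [card_insertNone, card_map]
    have heven := hN.even_card_of_det_psub_ne_zero hW
    by_cases hnone : none ∈ W
    · have hW' : W.eraseNone.insertNone = W := by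
        rw [insertNone_eraseNone, insert_eq_of_mem hnone]
      have hodd : Odd (W.eraseNone.map .some).card := by
        rw [hW'] at hcard
        rw [hcard, Nat.even_add_one] at heven
        exact Nat.not_even_iff_odd.mp heven
      rwa [hW', hN.det_psub_eq_zero_of_odd hodd, zero_add]
    · have hW' : W.eraseNone.map .some = W := by
        rw [map_some_eraseNone, erase_eq_of_notMem hnone]
      have hodd : Odd W.eraseNone.insertNone.card := by
        rw [hcard, hW']
        exact heven.add_one
      rwa [hW', hN.det_psub_eq_zero_of_odd hodd, add_zero]

end Bordered

end Matrix

/-- for a skew-symmetric `A` and a vector `v` over a field, the set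
system on `[n]` whose bases are the `I` with `(A + v vᵀ)[I]` nonsingular is a
strong Δ-matroid. -/
theorem stmt7 {n : ℕ} {K : Type*} [Field K]
    (A : Matrix (Fin n) (Fin n) K) (v : Fin n → K)
    (hskew : Aᵀ = -A) (hdiag : ∀ i, A i i = 0) :
    IsStrongDeltaMatroid (Finset.univ : Finset (Fin n))
      {I : Finset (Fin n) | (psub (A + Matrix.vecMulVec v v) I).det ≠ 0} := by
  have hA : A.IsAlternating := ⟨hskew, hdiag⟩
  refine isStrongDeltaMatroid_univ_of_strongExchange ⟨∅, by simp⟩ ?_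
  rw [hA.setOf_det_psub_add_vecMulVec_ne_zero v]
  exact (hA.bordered v).strongExchange.image_eraseNone
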